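/- arXiv:2311.09723 — 5 statements merged into one kernel-verified Lean document; each statement's English description precedes it below -/
import Mathlib

section
/- Let A be a non-empty (E,F)-invex subset of ℝ^n and let H : ℝ^n → ℝ be strictly (E,F)-preinvex on A. If x, y ∈ A are such that H(E(x)) ≤ H(w) for all w ∈ A and H(F(y)) ≤ H(w) for all w ∈ A, then E(x) = F(y); i.e., the minimization problem min_{w ∈ A} H(w) has at most one solution of this form. -/
/-- A strictly (E,F)-preinvex function on an (E,F)-invex set `A ⊆ ℝⁿ`
has at most one minimizer: if `H (E x)` and `H (F y)` are both minimal over `A`,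
then `E x = F y`. -/
theorem strict_EF_preinvex_unique_min
    {n : ℕ} (A : Set (EuclideanSpace ℝ (Fin n))) (hA : A.Nonempty)
    (E F : EuclideanSpace ℝ (Fin n) → EuclideanSpace ℝ (Fin n))
    (G : EuclideanSpace ℝ (Fin n) → EuclideanSpace ℝ (Fin n) → EuclideanSpace ℝ (Fin n))
    (hinvex : ∀ x ∈ A, ∀ y ∈ A, ∀ μ ∈ Set.Icc (0:ℝ) 1,
      F y + μ • G (E x) (F y) ∈ A)
    (H : EuclideanSpace ℝ (Fin n) → ℝ)
    (hpre : ∀ x ∈ A, ∀ y ∈ A, ∀ μ ∈ Set.Icc (0:ℝ) 1,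
      H (F y + μ • G (E x) (F y)) ≤ μ * H (E x) + (1 - μ) * H (F y))
    (hstrict : ∀ x ∈ A, ∀ y ∈ A, E x ≠ F y → ∀ μ ∈ Set.Ioo (0:ℝ) 1,
      H (F y + μ • G (E x) (F y)) < μ * H (E x) + (1 - μ) * H (F y))
    (x : EuclideanSpace ℝ (Fin n)) (hx : x ∈ A)
    (hxmin : ∀ w ∈ A, H (E x) ≤ H w)
    (y : EuclideanSpace ℝ (Fin n)) (hy : y ∈ A)
    (hymin : ∀ w ∈ A, H (F y) ≤ H w) :
    E x = F y := by
  by_contra hne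
  have hμ : (1/2 : ℝ) ∈ Set.Ioo (0:ℝ) 1 := by norm_num
  have hz : F y + (1/2 : ℝ) • G (E x) (F y) ∈ A :=
    hinvex x hx y hy (1/2) (by norm_num)
  have h1 := hstrict x hx y hy hne (1/2) hμ
  have h2 := hxmin _ hz
  have h3 := hymin _ hz
  linarith
end

section
/- Let A be a non-empty open (E,F)-invex subset of ℝ^n and let H : ℝ^n → ℝ be differentiable on A. If H is (E,F)-preinvex on A, then H is (E,F)-invex on A, i.e., for all x, y ∈ A, H(E(x)) − H(F(y)) ≥ ⟨∇H(F(y)), G(E(x), F(y))⟩. -/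
/-!
Along the ray `μ ↦ F y + μ • G (E x) (F y)`, preinvexity keeps `H` below the chord from
`H (F y)` to `H (E x)`, so every right difference quotient at `μ = 0` is at most
`H (E x) - H (F y)`; their limit is the directional derivative `⟪∇H (F y), G (E x) (F y)⟫`.
-/

open Filter Set Topology

theorem HasDerivAt.le_of_eventually_slope_le {f : ℝ → ℝ} {f' a c : ℝ} (hf : HasDerivAt f f' a)
    (hslope : ∀ᶠ t in 𝓝[>] a, slope f a t ≤ c) : f' ≤ c :=
  le_of_tendsto ((hasDerivAt_iff_tendsto_slope.mp hf).mono_left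
    (nhdsWithin_mono a fun _ ht => ne_of_gt ht : 𝓝[>] a ≤ 𝓝[≠] a)) hslope

theorem HasFDerivAt.apply_le_of_le_chord {E : Type*} [NormedAddCommGroup E] [NormedSpace ℝ E]
    {H : E → ℝ} {H' : E →L[ℝ] ℝ} {p v : E} {b : ℝ} (hH : HasFDerivAt H H' p)
    (hchord : ∀ μ ∈ Ioc (0 : ℝ) 1, H (p + μ • v) ≤ μ * b + (1 - μ) * H p) :
    H' v ≤ b - H p := by
  have hline : HasDerivAt (fun μ : ℝ => p + μ • v) v 0 := by
    simpa using ((hasDerivAt_id (0 : ℝ)).smul_const v).const_add p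
  have hdir : HasDerivAt (fun μ : ℝ => H (p + μ • v)) (H' v) 0 :=
    hH.comp_hasDerivAt_of_eq 0 hline (by simp)
  refine hdir.le_of_eventually_slope_le ?_
  filter_upwards [Ioc_mem_nhdsGT zero_lt_one] with μ hμ
  rw [slope_def_field, sub_zero, div_le_iff₀ hμ.1, zero_smul, add_zero]
  linarith [hchord μ hμ]

open RealInnerProductSpace

theorem EF_preinvex_imp_EF_invex_general
    {n : ℕ} (A : Set (EuclideanSpace ℝ (Fin n)))
    (E F : EuclideanSpace ℝ (Fin n) → EuclideanSpace ℝ (Fin n))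
    (G : EuclideanSpace ℝ (Fin n) → EuclideanSpace ℝ (Fin n) → EuclideanSpace ℝ (Fin n))
    (hinvex : ∀ x ∈ A, ∀ y ∈ A, ∀ μ ∈ Set.Icc (0:ℝ) 1,
      F y + μ • G (E x) (F y) ∈ A)
    (H : EuclideanSpace ℝ (Fin n) → ℝ)
    (hdiff : ∀ z ∈ A, DifferentiableAt ℝ H z)
    (hpre : ∀ x ∈ A, ∀ y ∈ A, ∀ μ ∈ Set.Icc (0:ℝ) 1,
      H (F y + μ • G (E x) (F y)) ≤ μ * H (E x) + (1 - μ) * H (F y)) :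
    ∀ x ∈ A, ∀ y ∈ A,
      H (E x) - H (F y) ≥ ⟪gradient H (F y), G (E x) (F y)⟫ := by
  intro x hx y hy
  have hFy : F y ∈ A := by simpa using hinvex x hx y hy 0 ⟨le_rfl, zero_le_one⟩
  rw [ge_iff_le, inner_gradient_left]
  exact (hdiff _ hFy).hasFDerivAt.apply_le_of_le_chord fun μ hμ =>
    hpre x hx y hy μ (Ioc_subset_Icc_self hμ)

/-- A differentiable (E,F)-preinvex function on a nonempty open
(E,F)-invex set `A ⊆ ℝⁿ` is (E,F)-invex:
`H (E x) - H (F y) ≥ ⟪∇H (F y), G (E x) (F y)⟫` for all `x, y ∈ A`. -/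
theorem EF_preinvex_imp_EF_invex
    {n : ℕ} (A : Set (EuclideanSpace ℝ (Fin n))) (hA : A.Nonempty) (hopen : IsOpen A)
    (E F : EuclideanSpace ℝ (Fin n) → EuclideanSpace ℝ (Fin n))
    (G : EuclideanSpace ℝ (Fin n) → EuclideanSpace ℝ (Fin n) → EuclideanSpace ℝ (Fin n))
    (hinvex : ∀ x ∈ A, ∀ y ∈ A, ∀ μ ∈ Set.Icc (0:ℝ) 1,
      F y + μ • G (E x) (F y) ∈ A)
    (H : EuclideanSpace ℝ (Fin n) → ℝ)
    (hdiff : ∀ z ∈ A, DifferentiableAt ℝ H z)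
    (hpre : ∀ x ∈ A, ∀ y ∈ A, ∀ μ ∈ Set.Icc (0:ℝ) 1,
      H (F y + μ • G (E x) (F y)) ≤ μ * H (E x) + (1 - μ) * H (F y)) :
    ∀ x ∈ A, ∀ y ∈ A,
      H (E x) - H (F y) ≥ ⟪gradient H (F y), G (E x) (F y)⟫ :=
  EF_preinvex_imp_EF_invex_general A E F G hinvex H hdiff hpre
end

section
/- Let A be a non-empty open (E,F)-invex subset of ℝ^n and let H : ℝ^n → ℝ be differentiable on A. Suppose H satisfies the generalized invexity inequality H(u) − H(z) ≥ ⟨∇H(z), G(u, z)⟩ for every z ∈ A and every u of the form u = E(x) or u = F(y) with x, y ∈ A, and suppose G satisfies Condition 𝒜: for all x, y ∈ A and μ ∈ [0,1], writing z_μ := F(y) + μ·G(E(x), F(y)), one has (𝒜₁) G(F(y), z_μ) = −μ·G(E(x), F(y)) and (𝒜₂) G(E(x), z_μ) = (1−μ)·G(E(x), F(y)). Then H is (E,F)-preinvex on A, i.e., for all x, y ∈ A and μ ∈ [0,1], H(F(y) + μ·G(E(x), F(y))) ≤ μ·H(E(x)) + (1−μ)·H(F(y)). -/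
open RealInnerProductSpace

/-- If a differentiable function `H` on a nonempty open (E,F)-invex set
`A ⊆ ℝⁿ` satisfies the generalized invexity inequality
`H u - H z ≥ ⟪∇H z, G u z⟫` for all `z ∈ A` and all `u` of the form `E x` or `F y`
with `x, y ∈ A`, and `G` satisfies Condition 𝒜, then `H` is (E,F)-preinvex on `A`. -/
theorem EF_invex_condA_imp_EF_preinvex
    {n : ℕ} (A : Set (EuclideanSpace ℝ (Fin n))) (hA : A.Nonempty) (hopen : IsOpen A)
    (E F : EuclideanSpace ℝ (Fin n) → EuclideanSpace ℝ (Fin n))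
    (G : EuclideanSpace ℝ (Fin n) → EuclideanSpace ℝ (Fin n) → EuclideanSpace ℝ (Fin n))
    (hinvex : ∀ x ∈ A, ∀ y ∈ A, ∀ μ ∈ Set.Icc (0:ℝ) 1,
      F y + μ • G (E x) (F y) ∈ A)
    (H : EuclideanSpace ℝ (Fin n) → ℝ)
    (hdiff : ∀ z ∈ A, DifferentiableAt ℝ H z)
    (hinvexE : ∀ x ∈ A, ∀ z ∈ A, H (E x) - H z ≥ ⟪gradient H z, G (E x) z⟫)
    (hinvexF : ∀ y ∈ A, ∀ z ∈ A, H (F y) - H z ≥ ⟪gradient H z, G (F y) z⟫)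
    (hcondA₁ : ∀ x ∈ A, ∀ y ∈ A, ∀ μ ∈ Set.Icc (0:ℝ) 1,
      G (F y) (F y + μ • G (E x) (F y)) = -μ • G (E x) (F y))
    (hcondA₂ : ∀ x ∈ A, ∀ y ∈ A, ∀ μ ∈ Set.Icc (0:ℝ) 1,
      G (E x) (F y + μ • G (E x) (F y)) = (1 - μ) • G (E x) (F y)) :
    ∀ x ∈ A, ∀ y ∈ A, ∀ μ ∈ Set.Icc (0:ℝ) 1,
      H (F y + μ • G (E x) (F y)) ≤ μ * H (E x) + (1 - μ) * H (F y) := by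
  intro x hx y hy μ hμ
  set z := F y + μ • G (E x) (F y) with hz
  have hzA : z ∈ A := hinvex x hx y hy μ hμ
  have h1 := hinvexE x hx z hzA
  have h2 := hinvexF y hy z hzA
  rw [hcondA₂ x hx y hy μ hμ] at h1
  rw [hcondA₁ x hx y hy μ hμ] at h2
  rw [real_inner_smul_right] at h1 h2
  have h0 : (0:ℝ) ≤ μ := hμ.1
  have h1' : (0:ℝ) ≤ 1 - μ := by linarith [hμ.2]
  nlinarith [mul_le_mul_of_nonneg_left (le_of_lt (lt_of_le_of_lt (le_refl (0:ℝ)) one_pos)) h0]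
end

section
/- Let A be a non-empty (E,F)-invex subset of ℝ^n and let H : ℝ^n → ℝ be (E,F)-preinvex on A. Suppose y̅ ∈ A is such that F(y̅) is a local optimal solution of the problem of minimizing H over A, i.e., there exists ε > 0 such that H(F(y̅)) ≤ H(z) for all z ∈ A with ‖z − F(y̅)‖ < ε. Then F(y̅) is a global minimum in the sense that H(F(y̅)) ≤ H(E(x)) for every x ∈ A. -/
/-- For an (E,F)-preinvex function `H` on an (E,F)-invex set `A ⊆ ℝⁿ`,
if `F y̅` is a local optimal solution of minimizing `H` over `A`, then it is a global
minimum in the sense that `H (F y̅) ≤ H (E x)` for every `x ∈ A`. -/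
theorem EF_preinvex_localMin_globalMin
    {n : ℕ} (A : Set (EuclideanSpace ℝ (Fin n))) (hA : A.Nonempty)
    (E F : EuclideanSpace ℝ (Fin n) → EuclideanSpace ℝ (Fin n))
    (G : EuclideanSpace ℝ (Fin n) → EuclideanSpace ℝ (Fin n) → EuclideanSpace ℝ (Fin n))
    (hinvex : ∀ x ∈ A, ∀ y ∈ A, ∀ μ ∈ Set.Icc (0:ℝ) 1,
      F y + μ • G (E x) (F y) ∈ A)
    (H : EuclideanSpace ℝ (Fin n) → ℝ)
    (hpre : ∀ x ∈ A, ∀ y ∈ A, ∀ μ ∈ Set.Icc (0:ℝ) 1,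
      H (F y + μ • G (E x) (F y)) ≤ μ * H (E x) + (1 - μ) * H (F y))
    (ybar : EuclideanSpace ℝ (Fin n)) (hybar : ybar ∈ A)
    (hlocal : ∃ ε > (0:ℝ), ∀ z ∈ A, ‖z - F ybar‖ < ε → H (F ybar) ≤ H z) :
    ∀ x ∈ A, H (F ybar) ≤ H (E x) := by
  obtain ⟨ε, hε, hloc⟩ := hlocal
  intro x hx
  set g := G (E x) (F ybar) with hg
  by_cases hg0 : g = 0
  · have h := hpre x hx ybar hybar 1 ⟨zero_le_one, le_refl 1⟩
    rw [← hg, hg0] at h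
    simpa using h
  · have hng : 0 < ‖g‖ := norm_pos_iff.mpr hg0
    set μ := min 1 (ε / (2 * ‖g‖)) with hμ
    have hμpos : 0 < μ := lt_min one_pos (by positivity)
    have hμ1 : μ ≤ 1 := min_le_left _ _
    have hmem : μ ∈ Set.Icc (0:ℝ) 1 := ⟨hμpos.le, hμ1⟩
    have hz : F ybar + μ • g ∈ A := hinvex x hx ybar hybar μ hmem
    have hnorm : ‖F ybar + μ • g - F ybar‖ < ε := by
      have : F ybar + μ • g - F ybar = μ • g := by abel
      rw [this, norm_smul, Real.norm_eq_abs, abs_of_pos hμpos]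
      calc μ * ‖g‖ ≤ (ε / (2 * ‖g‖)) * ‖g‖ := by
            apply mul_le_mul_of_nonneg_right (min_le_right _ _) hng.le
        _ = ε / 2 := by field_simp
        _ < ε := by linarith
    have h1 := hloc _ hz hnorm
    have h2 := hpre x hx ybar hybar μ hmem
    nlinarith [h1, h2, hμpos]
end

section
/- Let A be a non-empty (E,F)-invex subset of ℝ^n and let H : ℝ^n → ℝ be (E,F)-preinvex on A. Fix y ∈ A and suppose σ ∈ ℝ^n is an (E,F)-proximal sub-gradient of H at F(y), i.e., there exist λ > 0 and μ₀ > 0 such that H(z) ≥ H(F(y)) + ⟨σ, z − F(y)⟩ − λ·‖z − F(y)‖² for all z ∈ A with ‖z − F(y)‖ < μ₀. Then for every x ∈ A, H(E(x)) ≥ H(F(y)) + ⟨σ, G(E(x), F(y))⟩. -/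
open RealInnerProductSpace

/-- For an (E,F)-preinvex function `H` on an (E,F)-invex set `A ⊆ ℝⁿ`,
every (E,F)-proximal sub-gradient `σ` of `H` at `F y` satisfies
`H (E x) ≥ H (F y) + ⟪σ, G (E x) (F y)⟫` for all `x ∈ A`. -/
theorem EF_proximal_subgradient_ineq
    {n : ℕ} (A : Set (EuclideanSpace ℝ (Fin n))) (hA : A.Nonempty)
    (E F : EuclideanSpace ℝ (Fin n) → EuclideanSpace ℝ (Fin n))
    (G : EuclideanSpace ℝ (Fin n) → EuclideanSpace ℝ (Fin n) → EuclideanSpace ℝ (Fin n))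
    (hinvex : ∀ x ∈ A, ∀ y ∈ A, ∀ μ ∈ Set.Icc (0:ℝ) 1,
      F y + μ • G (E x) (F y) ∈ A)
    (H : EuclideanSpace ℝ (Fin n) → ℝ)
    (hpre : ∀ x ∈ A, ∀ y ∈ A, ∀ μ ∈ Set.Icc (0:ℝ) 1,
      H (F y + μ • G (E x) (F y)) ≤ μ * H (E x) + (1 - μ) * H (F y))
    (y : EuclideanSpace ℝ (Fin n)) (hy : y ∈ A)
    (σ : EuclideanSpace ℝ (Fin n))
    (hσ : ∃ lam > (0:ℝ), ∃ μ₀ > (0:ℝ), ∀ z ∈ A, ‖z - F y‖ < μ₀ →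
      H z ≥ H (F y) + ⟪σ, z - F y⟫ - lam * ‖z - F y‖ ^ 2) :
    ∀ x ∈ A, H (E x) ≥ H (F y) + ⟪σ, G (E x) (F y)⟫ := by
  obtain ⟨lam, hlam, μ₀, hμ₀, hsub⟩ := hσ
  intro x hx
  set g := G (E x) (F y) with hg
  set c := ‖g‖ with hc
  have hc0 : 0 ≤ c := norm_nonneg _
  rw [ge_iff_le, ← sub_nonneg]
  by_contra hcon
  push_neg at hcon
  set ε := -(H (E x) - (H (F y) + ⟪σ, g⟫)) with hε
  have hεpos : 0 < ε := by rw [hε]; linarith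
  set μ : ℝ := min 1 (min (μ₀ / (c + 1)) (ε / (lam * (c ^ 2 + 1)))) with hμ
  have hd1 : 0 < μ₀ / (c + 1) := by positivity
  have hd2 : 0 < ε / (lam * (c ^ 2 + 1)) := by positivity
  have hμpos : 0 < μ := lt_min one_pos (lt_min hd1 hd2)
  have hμ1 : μ ≤ 1 := min_le_left _ _
  have hμin : μ ∈ Set.Icc (0:ℝ) 1 := ⟨hμpos.le, hμ1⟩
  have hznorm : ‖(F y + μ • g) - F y‖ = μ * c := by
    simp [norm_smul, abs_of_pos hμpos, hc]
  have hsmall : ‖(F y + μ • g) - F y‖ < μ₀ := by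
    rw [hznorm]
    have h1 : μ ≤ μ₀ / (c + 1) := le_trans (min_le_right _ _) (min_le_left _ _)
    have : μ * c ≤ μ₀ / (c + 1) * c := by nlinarith
    have h2 : μ₀ / (c + 1) * c < μ₀ := by
      rw [div_mul_eq_mul_div, div_lt_iff₀ (by linarith)]
      nlinarith
    linarith
  have hmem := hinvex x hx y hy μ hμin
  have hlow := hsub _ hmem hsmall
  have hup := hpre x hx y hy μ hμin
  rw [hznorm] at hlow
  have hvec : (F y + μ • g) - F y = μ • g := add_sub_cancel_left _ _
  have hinner : ⟪σ, (F y + μ • g) - F y⟫ = μ * ⟪σ, g⟫ := by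
    rw [hvec, real_inner_smul_right]
  rw [hinner] at hlow
  -- combine
  have hkey : μ * (H (E x) - H (F y) - ⟪σ, g⟫) ≥ - (lam * (μ * c) ^ 2) := by nlinarith
  have hμ2 : μ ≤ ε / (lam * (c ^ 2 + 1)) := le_trans (min_le_right _ _) (min_le_right _ _)
  have hlt : lam * μ * c ^ 2 < ε := by
    have : lam * (c ^ 2 + 1) * μ ≤ ε := by
      rw [← le_div_iff₀' (by positivity)]; exact hμ2
    nlinarith
  have hdiv : H (E x) - H (F y) - ⟪σ, g⟫ ≥ - (lam * μ * c ^ 2) := by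
    have := hkey
    nlinarith
  linarith [hdiv, hlt]
end
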